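/- arXiv:1706.03668 — 3 statements merged into one kernel-verified Lean document; each statement's English description precedes it below -/
import Mathlib

section
/- h₂(3) = 18: the smallest m such that for every (a,b) ∈ ℤ² with b − a even there exists q ∈ {1,...,m} with a+q and b+q both coprime to 30, is 18. -/
open Finset

/-- The i-th prime, 1-indexed: p 1 = 2. -/
noncomputable def nthPrime (i : ℕ) : ℕ := Nat.nth Nat.Prime (i - 1)

/-- The n-th primorial, the product of the first n primes. -/
noncomputable def primor (n : ℕ) : ℕ := ∏ i ∈ Finset.range n, Nat.nth Nat.Prime i

/-- The set defining the Jacobsthal function. -/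
noncomputable def jSet (n : ℕ) : Set ℕ :=
  {m | ∀ a : ℤ, ∃ q : ℕ, 1 ≤ q ∧ q ≤ m ∧ Int.gcd (a + q) n = 1}

/-- The Jacobsthal function. -/
noncomputable def j (n : ℕ) : ℕ := sInf (jSet n)

/-- The set defining the paired Jacobsthal function. -/
noncomputable def j2Set (n : ℕ) : Set ℕ :=
  {m | ∀ a b : ℤ, (2 : ℤ) ∣ (b - a) → ∃ q : ℕ, 1 ≤ q ∧ q ≤ m ∧
    Int.gcd (a + q) n = 1 ∧ Int.gcd (b + q) n = 1}

/-- The paired Jacobsthal function. -/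
noncomputable def j2 (n : ℕ) : ℕ := sInf (j2Set n)

/-- The primorial paired Jacobsthal function. -/
noncomputable def h2 (n : ℕ) : ℕ := j2 (primor n)

/-- The radical of n: product of distinct prime divisors. -/
noncomputable def rad (n : ℕ) : ℕ := ∏ p ∈ n.primeFactors, p

/-!
Coprimality to 30 of `a + q` only depends on `a mod 30`, and `b - a` even forces `a` and `b` to have
the same residue mod 2, so `18 ∈ j2Set 30` is a finite check over pairs of residues mod 30 of equal
parity. Minimality is witnessed by the pair `(13, 29)`: for every `q ≤ 17`, one of `13 + q` and
`29 + q` shares a factor with 30.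
-/

lemma primor_three : primor 3 = 30 := by
  simp [primor, Finset.prod_range_succ, Nat.nth_prime_zero_eq_two, Nat.nth_prime_one_eq_three,
    Nat.nth_prime_two_eq_five]

lemma j2Set_mono {n m m' : ℕ} (hm : m ∈ j2Set n) (hle : m ≤ m') : m' ∈ j2Set n := by
  intro a b hab
  obtain ⟨q, hq, hqm, hqa, hqb⟩ := hm a b hab
  exact ⟨q, hq, hqm.trans hle, hqa, hqb⟩

lemma j2_eq_succ {n m : ℕ} (hmem : m + 1 ∈ j2Set n) (hnot : m ∉ j2Set n) : j2 n = m + 1 := by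
  refine le_antisymm (Nat.sInf_le hmem) (Nat.succ_le_of_lt ?_)
  by_contra! hle
  exact hnot (j2Set_mono (Nat.sInf_mem ⟨_, hmem⟩) hle)

lemma Int.gcd_emod_add (a q n : ℤ) : Int.gcd (a % n + q) n = Int.gcd (a + q) n := by
  rw [← Int.gcd_emod, Int.emod_add_emod, Int.gcd_emod]

lemma exists_coprime_shift_of_lt_thirty :
    ∀ r < 30, ∀ s < 30, r % 2 = s % 2 →
      ∃ q < 19, 0 < q ∧ Nat.Coprime (r + q) 30 ∧ Nat.Coprime (s + q) 30 := by
  decide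

lemma eighteen_mem_j2Set_thirty : 18 ∈ j2Set 30 := by
  intro a b hab
  have hr : a % 30 = ((a % 30).toNat : ℤ) :=
    (Int.toNat_of_nonneg (Int.emod_nonneg a (by norm_num))).symm
  have hs : b % 30 = ((b % 30).toNat : ℤ) :=
    (Int.toNat_of_nonneg (Int.emod_nonneg b (by norm_num))).symm
  obtain ⟨q, hq19, hq, hqa, hqb⟩ :=
    exists_coprime_shift_of_lt_thirty (a % 30).toNat (by omega) (b % 30).toNat (by omega)
      (by obtain ⟨k, hk⟩ := hab; omega)
  refine ⟨q, hq, by omega, ?_, ?_⟩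
  · rw [Nat.cast_ofNat, ← Int.gcd_emod_add, hr]; exact_mod_cast hqa
  · rw [Nat.cast_ofNat, ← Int.gcd_emod_add, hs]; exact_mod_cast hqb

lemma seventeen_not_mem_j2Set_thirty : 17 ∉ j2Set 30 := by
  intro h
  obtain ⟨q, hq, hq17, hqa, hqb⟩ := h 13 29 (by norm_num)
  interval_cases q <;> revert hqa hqb <;> decide

theorem stmt9 : h2 3 = 18 := by
  rw [h2, primor_three]
  exact j2_eq_succ eighteen_mem_j2Set_thirty seventeen_not_mem_j2Set_thirty
end

section
/- h₂(4) = 30: the smallest m such that for every (a,b) ∈ ℤ² with b − a even there exists q ∈ {1,...,m} with a+q and b+q both coprime to 210, is 30. -/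
open Finset

/-!
Coprimality to `n` depends only on the residue mod `n`, so for even `n` the covering property
defining `j2Set n` only has to be checked on pairs of residues `r, s < n` of equal parity; for
`n = 210` and `m = 30` this is a finite computation. Conversely the pair `(1, 107)` needs `q = 30`:
for every `q ≤ 29` one of `1 + q`, `107 + q` has a factor `2, 3, 5` or `7`.
-/

theorem primor_four : primor 4 = 210 := by
  simp [primor, Finset.prod_range_succ, Nat.nth_prime_zero_eq_two, Nat.nth_prime_one_eq_three,
    Nat.nth_prime_two_eq_five, Nat.nth_prime_three_eq_seven]

theorem Int.gcd_add_natCast_eq_gcd_toNat_emod_add (a : ℤ) {n : ℕ} (hn : 0 < n) (k : ℕ) :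
    Int.gcd (a + k) n = Nat.gcd ((a % n).toNat + k) n := by
  have hr : (((a % n).toNat : ℕ) : ℤ) = a % n := Int.toNat_of_nonneg (Int.emod_nonneg a (by omega))
  rw [← Int.gcd_natCast_natCast, ← Int.gcd_emod, ← Int.gcd_emod ((_ : ℕ) : ℤ)]
  push_cast
  rw [hr, Int.emod_add_emod]

theorem mem_j2Set_of_forall_residues {n m : ℕ} (hn : 0 < n) (heven : 2 ∣ n)
    (h : ∀ r < n, ∀ s < n, r % 2 = s % 2 →
      ∃ q < m, Nat.Coprime (r + q + 1) n ∧ Nat.Coprime (s + q + 1) n) :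
    m ∈ j2Set n := by
  intro a b hab
  have hn' : (0 : ℤ) < n := by exact_mod_cast hn
  have hres (x : ℤ) : (x % n).toNat < n := by
    have hlt := Int.emod_lt_of_pos x hn'
    omega
  have hparity : (a % n).toNat % 2 = (b % n).toNat % 2 := by
    have h2n : (2 : ℤ) ∣ n := by exact_mod_cast heven
    have ha := Int.emod_emod_of_dvd a h2n
    have hb := Int.emod_emod_of_dvd b h2n
    have ha0 := Int.emod_nonneg a hn'.ne'
    have hb0 := Int.emod_nonneg b hn'.ne'
    omega
  obtain ⟨q, hqm, hqa, hqb⟩ := h _ (hres a) _ (hres b) hparity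
  refine ⟨q + 1, by omega, hqm, ?_, ?_⟩ <;>
    rw [Int.gcd_add_natCast_eq_gcd_toNat_emod_add _ hn, ← add_assoc] <;> assumption

theorem thirty_mem_j2Set_210 : 30 ∈ j2Set 210 := by
  refine mem_j2Set_of_forall_residues (by norm_num) (by norm_num) ?_
  -- Phrased with `List.all`/`List.any` because kernel reduction of the `Prop` form is far slower.
  have h : ((List.range 210).all fun r => (List.range 210).all fun s => r % 2 != s % 2 ||
      (List.range 30).any fun q => Nat.gcd (r + q + 1) 210 == 1 && Nat.gcd (s + q + 1) 210 == 1)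
      = true := by
    decide +kernel
  simpa [Nat.Coprime, or_iff_not_imp_left] using h

theorem thirty_le_of_mem_j2Set_210 {m : ℕ} (hm : m ∈ j2Set 210) : 30 ≤ m := by
  have hblocked : ∀ q : ℕ, q < 30 → 1 ≤ q →
      ¬ (Int.gcd (1 + (q : ℤ)) 210 = 1 ∧ Int.gcd (107 + (q : ℤ)) 210 = 1) := by
    decide
  obtain ⟨q, hq1, hqm, hqa, hqb⟩ := hm 1 107 (by norm_num)
  by_contra! hm30
  exact hblocked q (by omega) hq1 ⟨hqa, hqb⟩

theorem stmt10 : h2 4 = 30 := by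
  rw [h2, primor_four]
  exact le_antisymm (Nat.sInf_le thirty_mem_j2Set_210)
    (le_csInf ⟨30, thirty_mem_j2Set_210⟩ fun _ => thirty_le_of_mem_j2Set_210)
end

section
/- For every n ≥ 2, h₂(n) is even. -/
open Finset

/-!
Since `2 ∣ N`, every `q` that works for `(a, b)` makes `a + q` odd, so has the parity opposite
to `a`. If `m` is odd and admissible, a witness `q ≤ m` for odd `a` is even, hence `q ≤ m - 1`;
for even `a` the witness `q` found for `(a - 1, b - 1)` is even, hence `q - 1 ≥ 1` works for
`(a, b)`. So an odd admissible `m` is never the least one.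
-/

lemma two_dvd_primor {n : ℕ} (hn : n ≠ 0) : 2 ∣ primor n := by
  rw [primor, ← Nat.nth_prime_zero_eq_two]
  exact dvd_prod_of_mem _ (mem_range.mpr (Nat.pos_of_ne_zero hn))

lemma Int.odd_of_gcd_eq_one {N : ℕ} (hN : 2 ∣ N) {x : ℤ} (h : Int.gcd x N = 1) : Odd x := by
  rw [← Int.not_even_iff_odd, even_iff_two_dvd]
  intro hx
  have := Int.dvd_gcd hx (Int.natCast_dvd_natCast.mpr hN)
  rw [h] at this
  norm_num at this

lemma pred_mem_j2Set {N m : ℕ} (hN : 2 ∣ N) (hm : m ∈ j2Set N) (hodd : Odd m) :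
    m - 1 ∈ j2Set N := by
  intro a b hab
  rcases Int.even_or_odd a with ha | ha
  · obtain ⟨q, hq1, hqm, hga, hgb⟩ := hm (a - 1) (b - 1) (by omega)
    have hq : Odd (a - 1 + q) := Int.odd_of_gcd_eq_one hN hga
    obtain ⟨q, rfl⟩ := Nat.exists_eq_add_of_le' hq1
    have hq0 : q ≠ 0 := by
      rintro rfl
      exact Int.not_even_iff_odd.mpr hq (by simpa using ha)
    have hshift (c : ℤ) : c + (q : ℤ) = c - 1 + ((q + 1 : ℕ) : ℤ) := by push_cast; ring
    exact ⟨q, by omega, by omega, hshift a ▸ hga, hshift b ▸ hgb⟩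
  · obtain ⟨q, hq1, hqm, hga, hgb⟩ := hm a b hab
    have hq : Odd (a + q) := Int.odd_of_gcd_eq_one hN hga
    have hqm' : q ≠ m := by
      rintro rfl
      exact Int.not_even_iff_odd.mpr hq (ha.add_odd (by exact_mod_cast hodd))
    exact ⟨q, hq1, by omega, hga, hgb⟩

lemma even_j2 {N : ℕ} (hN : 2 ∣ N) : Even (j2 N) := by
  rcases (j2Set N).eq_empty_or_nonempty with h | hne
  · simp [j2, h]
  by_contra hodd
  rw [Nat.not_even_iff_odd] at hodd
  have hle : j2 N ≤ j2 N - 1 := Nat.sInf_le (pred_mem_j2Set hN (Nat.sInf_mem hne) hodd)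
  have := hodd.pos
  omega

theorem stmt18 (n : ℕ) (hn : 2 ≤ n) : 2 ∣ h2 n :=
  (even_j2 (two_dvd_primor (by omega))).two_dvd
end
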